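/- arXiv:2106.05472 — 3 statements merged into one kernel-verified Lean document; each statement's English description precedes it below -/
import Mathlib

section
/- Let 0 < σ̲ ≤ σ̄ and let q be the oscillating-normal density with threshold c = 0, i.e. q(y) = (2σ̄/(σ̄+σ̲))·q*(y; σ̲) for y ≥ 0 and q(y) = (2σ̲/(σ̄+σ̲))·q*(y; σ̄) for y < 0, where q*(y; σ) = (1/(σ√(2π)))·exp(−y²/(2σ²)). Then q is a probability density with zero mean and variance σ̲·σ̄; that is, ∫_ℝ q(y) dy = 1, ∫_ℝ y·q(y) dy = 0, and ∫_ℝ y²·q(y) dy = σ̲·σ̄. -/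
/-!
On each half-line `q` is a multiple of a centred normal density, so every moment of `q` reduces
to the half-line Gaussian moments `∫_{y>0} yⁿ q*(y; σ) dy = (√2 σ)ⁿ Γ((n+1)/2) / (2√π)`, which
are Gamma integrals; the reflection `y ↦ -y` gives the negative half-line up to the sign `(-1)ⁿ`.
The weights `2σ̄/(σ̄+σ̲)` and `2σ̲/(σ̄+σ̲)` make the two half-lines contribute the same first
moment with opposite signs, and turn the second moment into `(σ̄σ̲² + σ̲σ̄²)/(σ̄+σ̲) = σ̲σ̄`.
-/

open MeasureTheory Real

noncomputable section

namespace LAB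

/-- The density `q*(y; σ)` of the normal distribution `N(0, σ²)`. -/
def normalDensity (σ y : ℝ) : ℝ :=
  (1 / (σ * Real.sqrt (2 * Real.pi))) * Real.exp (-(y ^ 2) / (2 * σ ^ 2))

/-- The oscillating-normal density with threshold `c = 0`. -/
def oscDensityZero (σlo σhi : ℝ) : ℝ → ℝ := fun y =>
  if 0 ≤ y then (2 * σhi / (σhi + σlo)) * normalDensity σlo y
  else (2 * σlo / (σhi + σlo)) * normalDensity σhi y

open Set

lemma normalDensity_eq (σ y : ℝ) :
    normalDensity σ y = (σ * √(2 * π))⁻¹ * exp (-(2 * σ ^ 2)⁻¹ * y ^ 2) := by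
  rw [normalDensity, one_div, neg_div, div_eq_inv_mul, neg_mul]

lemma normalDensity_neg (σ y : ℝ) : normalDensity σ (-y) = normalDensity σ y := by
  rw [normalDensity, neg_sq, normalDensity]

lemma integrable_pow_mul_normalDensity {σ : ℝ} (hσ : 0 < σ) (n : ℕ) :
    Integrable fun y => y ^ n * normalDensity σ y := by
  have h := (integrable_rpow_mul_exp_neg_mul_sq (b := (2 * σ ^ 2)⁻¹) (by positivity)
    (s := n) (by linarith [n.cast_nonneg (α := ℝ)])).const_mul (σ * √(2 * π))⁻¹
  refine h.congr (.of_forall fun y => ?_)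
  simp only [normalDensity_eq, rpow_natCast]
  ring

lemma integral_Ioi_pow_mul_normalDensity {σ : ℝ} (hσ : 0 < σ) (n : ℕ) :
    ∫ y in Ioi 0, y ^ n * normalDensity σ y = (√2 * σ) ^ n * Gamma ((n + 1) / 2) / (2 * √π) := by
  have hs : 0 < √2 * σ := by positivity
  have hb : (2 * σ ^ 2)⁻¹ = (√2 * σ) ^ (-2 : ℝ) := by
    rw [rpow_neg hs.le, rpow_two, mul_pow, sq_sqrt zero_le_two]
  have hpow : ((√2 * σ) ^ (-2 : ℝ)) ^ (-((n : ℝ) + 1) / 2) = (√2 * σ) ^ (n + 1) := by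
    rw [← rpow_mul hs.le, ← rpow_natCast]
    push_cast
    ring_nf
  calc ∫ y in Ioi 0, y ^ n * normalDensity σ y
      = (σ * √(2 * π))⁻¹ * ∫ y in Ioi 0, y ^ (n : ℝ) * exp (-(2 * σ ^ 2)⁻¹ * y ^ (2 : ℝ)) := by
        rw [← integral_const_mul]
        congr 1 with y
        rw [normalDensity_eq, rpow_natCast, rpow_two]
        ring
    _ = (√2 * σ) ^ n * Gamma ((n + 1) / 2) / (2 * √π) := by
        rw [integral_rpow_mul_exp_neg_mul_rpow two_pos (by linarith [n.cast_nonneg (α := ℝ)])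
          (by positivity), hb, hpow, sqrt_mul zero_le_two]
        field_simp
        ring

lemma integral_Iio_pow_mul_normalDensity (σ : ℝ) (n : ℕ) :
    ∫ y in Iio 0, y ^ n * normalDensity σ y
      = (-1) ^ n * ∫ y in Ioi 0, y ^ n * normalDensity σ y := by
  rw [← integral_const_mul, ← integral_Iic_eq_integral_Iio, ← neg_zero, ← integral_comp_neg_Ioi,
    neg_zero]
  congr 1 with y
  rw [normalDensity_neg, neg_pow]
  ring

lemma integral_pow_mul_oscDensityZero_eq_add {σlo σhi : ℝ} (hlo : 0 < σlo) (hhi : 0 < σhi)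
    (n : ℕ) :
    ∫ y, y ^ n * oscDensityZero σlo σhi y
      = 2 * σlo / (σhi + σlo) * (∫ y in Iio 0, y ^ n * normalDensity σhi y)
        + 2 * σhi / (σhi + σlo) * ∫ y in Ioi 0, y ^ n * normalDensity σlo y := by
  have hneg : EqOn (fun y => 2 * σlo / (σhi + σlo) * (y ^ n * normalDensity σhi y))
      (fun y => y ^ n * oscDensityZero σlo σhi y) (Iio 0) := fun y hy => by
    simp only [oscDensityZero, if_neg (not_le.mpr (mem_Iio.mp hy))]
    ring
  have hpos : EqOn (fun y => 2 * σhi / (σhi + σlo) * (y ^ n * normalDensity σlo y))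
      (fun y => y ^ n * oscDensityZero σlo σhi y) (Ici 0) := fun y hy => by
    simp only [oscDensityZero, if_pos (mem_Ici.mp hy)]
    ring
  rw [← intervalIntegral.integral_Iio_add_Ici (b := 0)
      ((integrable_pow_mul_normalDensity hhi n).const_mul _ |>.integrableOn.congr_fun hneg
        measurableSet_Iio)
      ((integrable_pow_mul_normalDensity hlo n).const_mul _ |>.integrableOn.congr_fun hpos
        measurableSet_Ici),
    ← setIntegral_congr_fun measurableSet_Iio hneg, ← setIntegral_congr_fun measurableSet_Ici hpos,
    integral_const_mul, integral_const_mul, integral_Ici_eq_integral_Ioi]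

lemma integral_pow_mul_oscDensityZero {σlo σhi : ℝ} (hlo : 0 < σlo) (hhi : 0 < σhi) (n : ℕ) :
    ∫ y, y ^ n * oscDensityZero σlo σhi y
      = √2 ^ n * Gamma ((n + 1) / 2) / √π
        * ((σhi * σlo ^ n + (-1) ^ n * σlo * σhi ^ n) / (σhi + σlo)) := by
  rw [integral_pow_mul_oscDensityZero_eq_add hlo hhi, integral_Iio_pow_mul_normalDensity,
    integral_Ioi_pow_mul_normalDensity hhi, integral_Ioi_pow_mul_normalDensity hlo]
  field_simp
  ring

/-- **Lemma (moments of the oscillating-normal density with zero threshold).**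
For `0 < σ̲ ≤ σ̄`, the density `q` (low-variance normal on gains, high-variance
normal on losses, suitably reweighted) integrates to one, has zero mean, and
has variance `σ̲·σ̄`. -/
theorem oscDensityZero_moments (σlo σhi : ℝ) (hσlo : 0 < σlo) (hσ : σlo ≤ σhi) :
    (∫ y, oscDensityZero σlo σhi y) = 1 ∧
    (∫ y, y * oscDensityZero σlo σhi y) = 0 ∧
    (∫ y, y ^ 2 * oscDensityZero σlo σhi y) = σlo * σhi := by
  have hσhi : 0 < σhi := hσlo.trans_le hσ
  refine ⟨?_, ?_, ?_⟩
  · have h := integral_pow_mul_oscDensityZero hσlo hσhi 0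
    simp only [pow_zero, one_mul, CharP.cast_eq_zero, zero_add, Gamma_one_half_eq] at h
    rw [h]
    field_simp
  · have h := integral_pow_mul_oscDensityZero hσlo hσhi 1
    simp only [pow_one] at h
    rw [h]
    ring
  · have hΓ : Gamma (3 / 2) = √π / 2 := by
      rw [show (3 / 2 : ℝ) = 1 / 2 + 1 by norm_num, Gamma_add_one one_half_pos.ne',
        Gamma_one_half_eq]
      ring
    have h := integral_pow_mul_oscDensityZero hσlo hσhi 2
    norm_num [hΓ] at h
    rw [h]
    field_simp
    ring

end LAB
end
end

section
/- Let σ > 0, m > 0, and let φ₁ : [0,∞) → ℝ be bounded, strictly increasing, strictly concave, with φ₁(0) = 0. Then ∫_0^∞ φ₁(y) · (exp(−(y−m)²/(2σ²)) − exp(−(y+m)²/(2σ²)))/(σ√(2π)) dy < φ₁(m). -/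
/-!
The weight is `w y = g y - g (-y)` with `g` the density of `N(m, σ²)`. On `(0, ∞)` it is
nonnegative, has mass `F = 1 - 2 ∫_{-∞}^0 g < 1` and first moment `∫ y g = m`.
Concavity gives a supporting line `ℓ y = φ₁ m + c (y - m)` of `φ₁` at `m`, and strict concavity
puts it strictly above `φ₁` at `0`, i.e. `ℓ 0 > 0`. Hence
`∫ φ₁ w ≤ ∫ ℓ w = φ₁ m - (1 - F) ℓ 0 < φ₁ m`.
-/

open MeasureTheory ProbabilityTheory Real Set
open scoped NNReal

theorem ConvexOn.add_rightDeriv_mul_sub_le {S : Set ℝ} {g : ℝ → ℝ} {x y : ℝ}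
    (hg : ConvexOn ℝ S g) (hx : x ∈ interior S) (hy : y ∈ S) :
    g x + derivWithin g (Ioi x) x * (y - x) ≤ g y := by
  rcases lt_trichotomy y x with hyx | rfl | hxy
  · have h := (hg.slope_le_leftDeriv_of_mem_interior hy hx hyx).trans
      (hg.leftDeriv_le_rightDeriv_of_mem_interior hx)
    rw [slope_def_field, div_le_iff₀ (sub_pos.2 hyx)] at h
    linarith
  · simp
  · have h := hg.rightDeriv_le_slope_of_mem_interior hx hy hxy
    rw [slope_def_field, le_div_iff₀ (sub_pos.2 hxy)] at h
    linarith

theorem ConcaveOn.le_add_rightDeriv_mul_sub {S : Set ℝ} {f : ℝ → ℝ} {x y : ℝ}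
    (hf : ConcaveOn ℝ S f) (hx : x ∈ interior S) (hy : y ∈ S) :
    f y ≤ f x + derivWithin f (Ioi x) x * (y - x) := by
  have h := hf.neg.add_rightDeriv_mul_sub_le hx hy
  rw [derivWithin.neg, Pi.neg_apply, Pi.neg_apply] at h
  linarith

theorem StrictConcaveOn.lt_add_mul_sub {S : Set ℝ} {f : ℝ → ℝ} {x z c : ℝ}
    (hf : StrictConcaveOn ℝ S f) (hx : x ∈ S) (hz : z ∈ S) (hzx : z ≠ x)
    (hle : ∀ y ∈ S, f y ≤ f x + c * (y - x)) :
    f z < f x + c * (z - x) := by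
  have hmid := hf.2 hz hx hzx (by norm_num : (0 : ℝ) < 1 / 2) (by norm_num : (0 : ℝ) < 1 / 2)
    (by norm_num)
  have hline := hle _
    (hf.1 hz hx (by norm_num) (by norm_num) (by norm_num : (1 / 2 : ℝ) + 1 / 2 = 1))
  simp only [smul_eq_mul] at hmid hline
  linarith

/-- Strict Jensen for the probability measure `w dy + (1 - ∫ w) δ₀` on `[0, ∞)`, whose mean
is `m`. -/
theorem StrictConcaveOn.integral_Ioi_mul_add_lt {φ w : ℝ → ℝ} {m : ℝ}
    (hφ : StrictConcaveOn ℝ (Ici 0) φ) (hm : 0 < m)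
    (hw : ∀ y ∈ Ioi (0 : ℝ), 0 ≤ w y) (hw_int : IntegrableOn w (Ioi 0))
    (hyw_int : IntegrableOn (fun y ↦ y * w y) (Ioi 0))
    (hφw_int : IntegrableOn (fun y ↦ φ y * w y) (Ioi 0))
    (hmass : ∫ y in Ioi 0, w y < 1) (hmean : ∫ y in Ioi 0, y * w y = m) :
    (∫ y in Ioi 0, φ y * w y) + (1 - ∫ y in Ioi 0, w y) * φ 0 < φ m := by
  set c := derivWithin φ (Ioi m) m
  have hsupp (y : ℝ) (hy : y ∈ Ici 0) : φ y ≤ φ m + c * (y - m) :=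
    hφ.concaveOn.le_add_rightDeriv_mul_sub (by rwa [interior_Ici]) hy
  have hφ0 : φ 0 + c * m < φ m := by
    simpa using hφ.lt_add_mul_sub (mem_Ici.2 hm.le) (mem_Ici.2 le_rfl) hm.ne hsupp
  have hle : ∫ y in Ioi 0, φ y * w y ≤ ∫ y in Ioi 0, ((φ m - c * m) * w y + c * (y * w y)) := by
    refine setIntegral_mono_on hφw_int ((hw_int.const_mul _).add (hyw_int.const_mul _))
      measurableSet_Ioi fun y hy ↦ ?_
    have := mul_le_mul_of_nonneg_right (hsupp y (Ioi_subset_Ici_self hy)) (hw y hy)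
    linarith
  rw [integral_add (hw_int.const_mul _) (hyw_int.const_mul _), integral_const_mul,
    integral_const_mul, hmean] at hle
  set F := ∫ y in Ioi 0, w y
  have := mul_pos (sub_pos.2 hmass) (sub_pos.2 hφ0)
  linear_combination hle + this

section Folding

variable {g : ℝ → ℝ}

theorem integral_Ioi_sub_comp_neg (hg : Integrable g) :
    ∫ y in Ioi (0 : ℝ), (g y - g (-y)) = (∫ y, g y) - 2 * ∫ y in Iic 0, g y := by
  have hrefl : ∫ y in Ioi (0 : ℝ), g (-y) = ∫ y in Iic 0, g y := by
    rw [integral_comp_neg_Ioi, neg_zero]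
  rw [integral_sub hg.integrableOn hg.comp_neg.integrableOn, hrefl]
  linarith [intervalIntegral.integral_Iic_add_Ioi (b := 0) hg.integrableOn hg.integrableOn]

theorem integrable_mul_sub_comp_neg (hg : Integrable fun y ↦ y * g y) :
    Integrable fun y ↦ y * (g y - g (-y)) :=
  (hg.add hg.comp_neg).congr (.of_forall fun y ↦ by simp only [Pi.add_apply]; ring)

theorem integral_Ioi_mul_sub_comp_neg (hg : Integrable fun y ↦ y * g y) :
    ∫ y in Ioi (0 : ℝ), y * (g y - g (-y)) = ∫ y, y * g y := by
  have hrefl : ∫ y in Ioi (0 : ℝ), y * g (-y) = -∫ y in Iic 0, y * g y := by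
    rw [← integral_neg]
    simpa using integral_comp_neg_Ioi 0 fun y ↦ -(y * g y)
  have hint : IntegrableOn (fun y ↦ y * g (-y)) (Ioi 0) :=
    (hg.comp_neg.neg.congr (.of_forall fun y ↦ by simp only [Pi.neg_apply]; ring)).integrableOn
  simp_rw [mul_sub]
  rw [integral_sub hg.integrableOn hint, hrefl, sub_neg_eq_add, add_comm,
    intervalIntegral.integral_Iic_add_Ioi hg.integrableOn hg.integrableOn]

end Folding

theorem gaussianPDFReal_sq_eq {σ : ℝ} (hσ : 0 < σ) (μ x : ℝ) :
    gaussianPDFReal μ (σ ^ 2).toNNReal x =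
      rexp (-(x - μ) ^ 2 / (2 * σ ^ 2)) / (σ * √(2 * π)) := by
  rw [gaussianPDFReal_def, Real.coe_toNNReal _ (sq_nonneg σ), div_eq_inv_mul,
    show 2 * π * σ ^ 2 = σ ^ 2 * (2 * π) by ring, sqrt_mul (sq_nonneg σ), sqrt_sq hσ.le]

theorem gaussianPDFReal_neg_le {μ : ℝ} (v : ℝ≥0) {y : ℝ} (hμ : 0 ≤ μ) (hy : 0 ≤ y) :
    gaussianPDFReal μ v (-y) ≤ gaussianPDFReal μ v y := by
  have h : (y - μ) ^ 2 ≤ (-y - μ) ^ 2 := by nlinarith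
  simp only [gaussianPDFReal_def]
  gcongr _ * rexp ?_
  gcongr

theorem integrable_mul_gaussianPDFReal (μ : ℝ) {v : ℝ≥0} (hv : v ≠ 0) :
    Integrable fun y ↦ y * gaussianPDFReal μ v y := by
  have h : Integrable id (gaussianReal μ v) := memLp_one_iff_integrable.1 (memLp_id_gaussianReal 1)
  rw [gaussianReal_of_var_ne_zero _ hv, integrable_withDensity_iff_integrable_smul'
    (measurable_gaussianPDF μ v) (ae_of_all _ fun _ ↦ gaussianPDF_lt_top)] at h
  simpa [toReal_gaussianPDF, mul_comm] using h

theorem integral_mul_gaussianPDFReal (μ : ℝ) {v : ℝ≥0} (hv : v ≠ 0) :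
    ∫ y, y * gaussianPDFReal μ v y = μ := by
  simpa [integral_gaussianReal_eq_integral_smul hv, mul_comm] using
    integral_id_gaussianReal (μ := μ) (v := v)

theorem setIntegral_Iic_gaussianPDFReal_pos (μ : ℝ) {v : ℝ≥0} (hv : v ≠ 0) (a : ℝ) :
    0 < ∫ y in Iic a, gaussianPDFReal μ v y := by
  rw [setIntegral_pos_iff_support_of_nonneg_ae (.of_forall (gaussianPDFReal_nonneg μ v))
    (integrable_gaussianPDFReal μ v).integrableOn]
  simp [Function.support, fun x ↦ (gaussianPDFReal_pos μ v x hv).ne']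

namespace LAB

theorem folded_gaussian_jensen_general (σ m : ℝ) (hσ : 0 < σ) (hm : 0 < m)
    (φ₁ : ℝ → ℝ) (hφ₁0 : φ₁ 0 = 0)
    (hbdd : ∃ C : ℝ, ∀ x ∈ Set.Ici (0 : ℝ), |φ₁ x| ≤ C)
    (hconc : StrictConcaveOn ℝ (Set.Ici 0) φ₁) :
    (∫ y in Set.Ioi (0 : ℝ), φ₁ y *
        ((Real.exp (-(y - m) ^ 2 / (2 * σ ^ 2)) -
          Real.exp (-(y + m) ^ 2 / (2 * σ ^ 2))) / (σ * Real.sqrt (2 * Real.pi))))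
      < φ₁ m := by
  obtain ⟨C, hC⟩ := hbdd
  set v := (σ ^ 2).toNNReal
  have hv : v ≠ 0 := by simpa [v] using hσ.ne'
  set g := gaussianPDFReal m v
  have hw (y : ℝ) : (rexp (-(y - m) ^ 2 / (2 * σ ^ 2)) - rexp (-(y + m) ^ 2 / (2 * σ ^ 2))) /
      (σ * √(2 * π)) = g y - g (-y) := by
    simp only [g, v, gaussianPDFReal_sq_eq hσ, sub_div, neg_sub_left, neg_sq, add_comm]
  simp_rw [hw]
  have hg := integrable_gaussianPDFReal m v
  have hyg := integrable_mul_gaussianPDFReal m hv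
  have hφ_meas : AEStronglyMeasurable φ₁ (volume.restrict (Ioi 0)) := by
    refine ContinuousOn.aestronglyMeasurable ?_ measurableSet_Ioi
    simpa using hconc.concaveOn.continuousOn_interior
  have hφg : IntegrableOn (fun y ↦ φ₁ y * (g y - g (-y))) (Ioi 0) :=
    (hg.sub hg.comp_neg).integrableOn.bdd_mul hφ_meas
      (ae_restrict_of_forall_mem measurableSet_Ioi fun y hy ↦ hC y (Ioi_subset_Ici_self hy))
  have hmass : ∫ y in Ioi 0, (g y - g (-y)) < 1 := by
    rw [integral_Ioi_sub_comp_neg hg, integral_gaussianPDFReal_eq_one m hv]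
    linarith [setIntegral_Iic_gaussianPDFReal_pos m hv 0]
  simpa [hφ₁0] using hconc.integral_Ioi_mul_add_lt hm
    (fun y hy ↦ sub_nonneg.2 (gaussianPDFReal_neg_le v hm.le (le_of_lt hy)))
    (hg.sub hg.comp_neg).integrableOn (integrable_mul_sub_comp_neg hyg).integrableOn hφg hmass
    (by rw [integral_Ioi_mul_sub_comp_neg hyg, integral_mul_gaussianPDFReal m hv])

/-- **Lemma (strict Jensen-type inequality for the folded Gaussian weight).**
For `σ > 0`, `m > 0` and `φ₁` bounded, strictly increasing and strictly concave
on `[0,∞)` with `φ₁(0) = 0`,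
`∫₀^∞ φ₁(y)·(exp(−(y−m)²/2σ²) − exp(−(y+m)²/2σ²))/(σ√(2π)) dy < φ₁(m)`. -/
theorem folded_gaussian_jensen (σ m : ℝ) (hσ : 0 < σ) (hm : 0 < m)
    (φ₁ : ℝ → ℝ) (hφ₁0 : φ₁ 0 = 0)
    (hbdd : ∃ C : ℝ, ∀ x ∈ Set.Ici (0 : ℝ), |φ₁ x| ≤ C)
    (hmono : StrictMonoOn φ₁ (Set.Ici 0))
    (hconc : StrictConcaveOn ℝ (Set.Ici 0) φ₁) :
    (∫ y in Set.Ioi (0 : ℝ), φ₁ y *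
        ((Real.exp (-(y - m) ^ 2 / (2 * σ ^ 2)) -
          Real.exp (-(y + m) ^ 2 / (2 * σ ^ 2))) / (σ * Real.sqrt (2 * Real.pi))))
      < φ₁ m :=
  folded_gaussian_jensen_general σ m hσ hm φ₁ hφ₁0 hbdd hconc

end LAB
end

section
/- Let P* be the no-learning switching measure. Then for every N ≥ 1: P*(∩_{n=N}^∞ {Σ_{i=1}^n X_i ≤ 0}) ≤ σ̄/(σ̄+σ̲) < 1 and P*(∩_{n=N}^∞ {Σ_{i=1}^n X_i > 0}) ≤ σ̄/(σ̄+σ̲) < 1; that is, under P*, with probability at least σ̲/(σ̄+σ̲) the running sum does not stay forever in the region of cumulative losses (respectively gains) after time N. -/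
/-!
The two events have probability zero. Under `P*` the running sum `S n` is a martingale for the
filtration of the first `n` coordinates (both laws are centred), with increments bounded by
`max |Ω̄|`, so almost surely it either converges or is unbounded above. Convergence forces the
increments, which take values in the finite set `Ω̄`, to vanish eventually; but whatever the past,
the next increment is zero with probability at most `max (μ̲ {0}) (μ̄ {0}) < 1` (both variances are
positive), so they vanish eventually with probability zero. Hence almost surely neither `S n` nor
`-S n` stays `≤ 0` from some time on.
-/

open MeasureTheory Filter Real Set
open scoped ENNReal NNReal

noncomputable section

namespace LAB

/-- `P` is the no-learning switching measure: the probability measure on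
`Ω = Ω̄^ℕ` (characterized by its values on cylinders) built by the
Ionescu–Tulcea construction from the one-step-ahead conditionals that use the
high-variance law `μhi` when the running sum of past outcomes is `≤ 0` and the
low-variance law `μlo` when it is `> 0`. -/
def IsSwitchMeasure (Obar : Finset ℝ) (μlo μhi : Measure ↥Obar)
    (P : Measure (ℕ → ↥Obar)) : Prop :=
  IsProbabilityMeasure P ∧
  ∀ n : ℕ, ∀ x : ℕ → ↥Obar,
    P {ω | ∀ i < n, ω i = x i} =
      ∏ i ∈ Finset.range n,
        (if ∑ j ∈ Finset.range i, (x j : ℝ) ≤ 0 then μhi {x i} else μlo {x i})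

open ProbabilityTheory
open scoped Topology

theorem _root_.MeasureTheory.Submartingale.measure_eventually_nonpos_eq_zero {Ω : Type*}
    {m0 : MeasurableSpace Ω} {μ : Measure Ω} [IsFiniteMeasure μ] {ℱ : Filtration ℕ m0}
    {f : ℕ → Ω → ℝ} (hf : Submartingale f ℱ μ) {R : ℝ≥0}
    (hbdd : ∀ᵐ ω ∂μ, ∀ i, |f (i + 1) ω - f i ω| ≤ R)
    (hdiv : ∀ᵐ ω ∂μ, ∀ c, ¬ Tendsto (fun n => f n ω) atTop (𝓝 c)) :
    μ {ω | ∀ᶠ n in atTop, f n ω ≤ 0} = 0 := by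
  refine measure_eq_zero_iff_ae_notMem.2 ?_
  filter_upwards [hf.bddAbove_iff_exists_tendsto hbdd, hdiv] with ω hiff hω hev
  obtain ⟨c, hc⟩ := hiff.1 (isBoundedUnder_of_eventually_le hev).bddAbove_range
  exact hω c hc

variable {Obar : Finset ℝ}

def take (n : ℕ) (ω : ℕ → ↥Obar) : Fin n → ↥Obar := fun i => ω i

@[fun_prop]
lemma measurable_take (n : ℕ) : Measurable (take (Obar := Obar) n) :=
  measurable_pi_lambda _ fun _ => measurable_pi_apply _

def switchKernel (μlo μhi : Measure ↥Obar) (n : ℕ) : Kernel (Fin n → ↥Obar) ↥Obar :=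
  Kernel.ofFunOfCountable fun y => if ∑ i, (y i : ℝ) ≤ 0 then μhi else μlo

lemma switchKernel_apply (μlo μhi : Measure ↥Obar) {n : ℕ} (y : Fin n → ↥Obar) :
    switchKernel μlo μhi n y = if ∑ i, (y i : ℝ) ≤ 0 then μhi else μlo := rfl

instance isMarkovKernel_switchKernel (μlo μhi : Measure ↥Obar) [IsProbabilityMeasure μlo]
    [IsProbabilityMeasure μhi] (n : ℕ) : IsMarkovKernel (switchKernel μlo μhi n) :=
  ⟨fun y => by rw [switchKernel_apply]; split <;> infer_instance⟩

variable {μlo μhi : Measure ↥Obar} {P : Measure (ℕ → ↥Obar)}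

lemma setOf_take_eq_take (n : ℕ) (z : ℕ → ↥Obar) :
    {ω | take n ω = take n z} = {ω | ∀ i < n, ω i = z i} := by
  ext ω
  simp [take, funext_iff, Fin.forall_iff]

lemma measure_take_eq_and_coord_eq (hP : IsSwitchMeasure Obar μlo μhi P) (n : ℕ) (z : ℕ → ↥Obar) :
    P {ω | take n ω = take n z ∧ ω n = z n} =
      P {ω | take n ω = take n z} * switchKernel μlo μhi n (take n z) {z n} := by
  have hcyl : {ω | take n ω = take n z ∧ ω n = z n} = {ω | ∀ i < n + 1, ω i = z i} := by
    ext ω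
    simp only [Set.mem_ofPred_eq, Nat.forall_lt_succ_right, take, funext_iff, Fin.forall_iff]
  rw [hcyl, setOf_take_eq_take, hP.2, hP.2, Finset.prod_range_succ, switchKernel_apply]
  congr 1
  simp only [take, Fin.sum_univ_eq_sum_range (fun i => (z i : ℝ))]
  split_ifs <;> rfl

variable [IsProbabilityMeasure μlo] [IsProbabilityMeasure μhi]

theorem map_take_coord_eq_compProd (hP : IsSwitchMeasure Obar μlo μhi P) (n : ℕ) :
    P.map (fun ω => (take n ω, ω n)) = P.map (take n) ⊗ₘ switchKernel μlo μhi n := by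
  refine Measure.ext_of_singleton fun ⟨y, v⟩ => ?_
  set z : ℕ → ↥Obar := fun i => if h : i < n then y ⟨i, h⟩ else v
  have hy : take n z = y := funext fun i => by simp [z, take]
  have hv : z n = v := by simp [z]
  rw [Measure.map_apply (by fun_prop) (measurableSet_singleton _), ← Set.singleton_prod_singleton,
    Measure.compProd_apply_prod (measurableSet_singleton _) (measurableSet_singleton _),
    lintegral_singleton, Measure.map_apply (by fun_prop) (measurableSet_singleton _), ← hy, ← hv,
    mul_comm]
  exact measure_take_eq_and_coord_eq hP n z

lemma measure_take_preimage_inter_coord_le (hP : IsSwitchMeasure Obar μlo μhi P) {n : ℕ}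
    (T : Set (Fin n → ↥Obar)) {V : Set ↥Obar} {q : ℝ≥0∞} (hlo : μlo V ≤ q) (hhi : μhi V ≤ q) :
    P (take n ⁻¹' T ∩ (fun ω => ω n) ⁻¹' V) ≤ q * P (take n ⁻¹' T) := by
  have hT : MeasurableSet T := .of_discrete
  have hV : MeasurableSet V := .of_discrete
  calc P (take n ⁻¹' T ∩ (fun ω => ω n) ⁻¹' V)
      = (P.map (take n) ⊗ₘ switchKernel μlo μhi n) (T ×ˢ V) := by
        rw [← map_take_coord_eq_compProd hP, Measure.map_apply (by fun_prop) (hT.prod hV)]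
        rfl
    _ = ∫⁻ y in T, switchKernel μlo μhi n y V ∂P.map (take n) :=
        Measure.compProd_apply_prod hT hV
    _ ≤ ∫⁻ _ in T, q ∂P.map (take n) :=
        lintegral_mono fun y => by rw [switchKernel_apply]; split <;> assumption
    _ = q * P (take n ⁻¹' T) := by
        rw [setLIntegral_const, Measure.map_apply (by fun_prop) hT]

lemma setIntegral_take_preimage_coord_eq_zero (hP : IsSwitchMeasure Obar μlo μhi P)
    (hmeanlo : ∫ x, (x : ℝ) ∂μlo = 0) (hmeanhi : ∫ x, (x : ℝ) ∂μhi = 0) {n : ℕ}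
    (T : Set (Fin n → ↥Obar)) :
    ∫ ω in take n ⁻¹' T, (ω n : ℝ) ∂P = 0 := by
  have := hP.1
  have hT : MeasurableSet T := .of_discrete
  calc ∫ ω in take n ⁻¹' T, (ω n : ℝ) ∂P
      = ∫ p in T ×ˢ univ, (p.2 : ℝ) ∂P.map (fun ω => (take n ω, ω n)) := by
        rw [setIntegral_map (hT.prod .univ) (by fun_prop)
          (measurable_take n |>.prodMk (measurable_pi_apply n)).aemeasurable, Set.prod_univ]
        rfl
    _ = ∫ y in T, ∫ v, (v : ℝ) ∂switchKernel μlo μhi n y ∂P.map (take n) := by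
        rw [map_take_coord_eq_compProd hP, Measure.setIntegral_compProd hT .univ
          Integrable.of_finite.integrableOn]
        simp only [Measure.restrict_univ]
    _ = 0 := by
        refine setIntegral_eq_zero_of_forall_eq_zero fun y _ => ?_
        rw [switchKernel_apply]
        split <;> assumption

variable (Obar) in
def coordFiltration : Filtration ℕ (MeasurableSpace.pi : MeasurableSpace (ℕ → ↥Obar)) where
  seq n := MeasurableSpace.comap (take n) inferInstance
  mono' n m hnm := by
    show MeasurableSpace.comap (take n) _ ≤ MeasurableSpace.comap (take m) _
    have : take n = (fun y i => y (Fin.castLE hnm i)) ∘ take (Obar := Obar) m := rfl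
    rw [this, ← MeasurableSpace.comap_comp]
    exact MeasurableSpace.comap_mono (Measurable.comap_le (by fun_prop))
  le' n := (measurable_take n).comap_le

def runningSum (n : ℕ) (ω : ℕ → ↥Obar) : ℝ := ∑ i ∈ Finset.range n, (ω i : ℝ)

lemma runningSum_succ (n : ℕ) (ω : ℕ → ↥Obar) :
    runningSum (n + 1) ω = runningSum n ω + ω n :=
  Finset.sum_range_succ _ _

lemma stronglyAdapted_runningSum :
    StronglyAdapted (coordFiltration Obar) (runningSum (Obar := Obar)) := by
  intro n
  have : runningSum n = (fun y : Fin n → ↥Obar => ∑ i, (y i : ℝ)) ∘ take n := by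
    funext ω
    exact (Fin.sum_univ_eq_sum_range (fun i => (ω i : ℝ)) n).symm
  rw [this]
  exact ((measurable_of_countable _).comp (comap_measurable _)).stronglyMeasurable

lemma integrable_coord [IsFiniteMeasure P] (i : ℕ) : Integrable (fun ω => (ω i : ℝ)) P :=
  (integrable_map_measure (g := fun v : ↥Obar => (v : ℝ)) (f := fun ω : ℕ → ↥Obar => ω i)
    (by fun_prop) (measurable_pi_apply i).aemeasurable).1 Integrable.of_finite

lemma integrable_runningSum [IsFiniteMeasure P] (n : ℕ) : Integrable (runningSum n) P :=
  integrable_finsetSum _ fun i _ => integrable_coord i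

theorem martingale_runningSum (hP : IsSwitchMeasure Obar μlo μhi P)
    (hmeanlo : ∫ x, (x : ℝ) ∂μlo = 0) (hmeanhi : ∫ x, (x : ℝ) ∂μhi = 0) :
    Martingale runningSum (coordFiltration Obar) P := by
  have := hP.1
  refine martingale_of_setIntegral_eq_succ stronglyAdapted_runningSum integrable_runningSum ?_
  rintro n _ ⟨T, -, rfl⟩
  simp_rw [runningSum_succ]
  rw [integral_add (integrable_runningSum n).integrableOn (integrable_coord n).integrableOn,
    setIntegral_take_preimage_coord_eq_zero hP hmeanlo hmeanhi, add_zero]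

lemma measure_forall_coord_mem_le (hP : IsSwitchMeasure Obar μlo μhi P) {V : Set ↥Obar}
    {q : ℝ≥0∞} (hlo : μlo V ≤ q) (hhi : μhi V ≤ q) (m k : ℕ) :
    P {ω | ∀ i < k, ω (m + i) ∈ V} ≤ q ^ k := by
  have := hP.1
  induction k with
  | zero => simp
  | succ k ih =>
    set T : Set (Fin (m + k) → ↥Obar) := {y | ∀ i (h : i < k), y ⟨m + i, by omega⟩ ∈ V}
    have hk : {ω | ∀ i < k, ω (m + i) ∈ V} = take (m + k) ⁻¹' T := rfl
    have hk1 : {ω | ∀ i < k + 1, ω (m + i) ∈ V} =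
        take (m + k) ⁻¹' T ∩ (fun ω => ω (m + k)) ⁻¹' V := by
      ext ω
      simp only [Set.mem_ofPred_eq, Nat.forall_lt_succ_right]
      rfl
    calc P {ω | ∀ i < k + 1, ω (m + i) ∈ V}
        ≤ q * P (take (m + k) ⁻¹' T) := hk1 ▸ measure_take_preimage_inter_coord_le hP T hlo hhi
      _ ≤ q * q ^ k := by rw [← hk]; gcongr
      _ = q ^ (k + 1) := (pow_succ' q k).symm

theorem measure_eventually_coord_mem_eq_zero (hP : IsSwitchMeasure Obar μlo μhi P)
    {V : Set ↥Obar} (hlo : μlo V < 1) (hhi : μhi V < 1) :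
    P {ω | ∀ᶠ i in atTop, ω i ∈ V} = 0 := by
  have hsub : {ω : ℕ → ↥Obar | ∀ᶠ i in atTop, ω i ∈ V} ⊆ ⋃ m, {ω | ∀ i ≥ m, ω i ∈ V} :=
    fun ω hω => mem_iUnion.2 (eventually_atTop.1 hω)
  refine measure_mono_null hsub (measure_iUnion_null fun m => le_antisymm ?_ bot_le)
  refine ge_of_tendsto' (ENNReal.tendsto_pow_atTop_nhds_zero_of_lt_one (max_lt hlo hhi)) fun k => ?_
  calc P {ω | ∀ i ≥ m, ω i ∈ V}
      ≤ P {ω | ∀ i < k, ω (m + i) ∈ V} := measure_mono fun ω hω i _ => hω _ (Nat.le_add_right m i)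
    _ ≤ _ := measure_forall_coord_mem_le hP (le_max_left _ _) (le_max_right _ _) m k

lemma abs_runningSum_succ_sub_le (i : ℕ) (ω : ℕ → ↥Obar) :
    |runningSum (i + 1) ω - runningSum i ω| ≤ (Obar.sup (‖·‖₊) : ℝ≥0) := by
  rw [runningSum_succ, add_sub_cancel_left, ← Real.norm_eq_abs, ← coe_nnnorm]
  exact_mod_cast Finset.le_sup (f := (‖·‖₊)) (ω i).2

lemma tendsto_coord_of_tendsto_runningSum {ω : ℕ → ↥Obar} {c : ℝ}
    (h : Tendsto (fun n => runningSum n ω) atTop (𝓝 c)) :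
    Tendsto (fun i => (ω i : ℝ)) atTop (𝓝 0) := by
  simpa [runningSum_succ] using (h.comp (tendsto_add_atTop_nat 1)).sub h

lemma eventually_coe_eq_zero_of_tendsto {x : ℕ → ↥Obar}
    (hx : Tendsto (fun i => (x i : ℝ)) atTop (𝓝 0)) : ∀ᶠ i in atTop, (x i : ℝ) = 0 := by
  have hopen : IsOpen (↑(Obar.filter (· ≠ 0)) : Set ℝ)ᶜ :=
    (Finset.finite_toSet _).isClosed.isOpen_compl
  filter_upwards [hx.eventually (hopen.mem_nhds (by simp))] with i hi
  by_contra h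
  exact hi (by simp [h])

lemma measure_coe_eq_zero_lt_one {μ : Measure ↥Obar} [IsProbabilityMeasure μ] {σ : ℝ}
    (hσ : σ ≠ 0) (hvar : ∫ x, (x : ℝ) ^ 2 ∂μ = σ ^ 2) : μ {x | (x : ℝ) = 0} < 1 := by
  refine prob_le_one.lt_of_ne fun h => pow_ne_zero 2 hσ ?_
  have hzero : ∀ᵐ x : ↥Obar ∂μ, (x : ℝ) = 0 := ae_iff.2 ((prob_compl_eq_zero_iff .of_discrete).2 h)
  rw [← hvar, integral_eq_zero_of_ae (hzero.mono fun x hx => by simp [hx])]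

theorem ae_not_tendsto_runningSum (hP : IsSwitchMeasure Obar μlo μhi P)
    (hlo : μlo {x | (x : ℝ) = 0} < 1) (hhi : μhi {x | (x : ℝ) = 0} < 1) :
    ∀ᵐ ω ∂P, ∀ c, ¬ Tendsto (fun n => runningSum n ω) atTop (𝓝 c) := by
  filter_upwards [measure_eq_zero_iff_ae_notMem.1 (measure_eventually_coord_mem_eq_zero hP hlo hhi)]
    with ω hω c hc
  exact hω (eventually_coe_eq_zero_of_tendsto (tendsto_coord_of_tendsto_runningSum hc))

theorem switching_indefinitely_general (Obar : Finset ℝ) (μlo μhi : Measure ↥Obar)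
    (σlo σhi : ℝ) (hσlo : 0 < σlo) (hσ : σlo < σhi)
    (hplo : IsProbabilityMeasure μlo) (hphi : IsProbabilityMeasure μhi)
    (hmeanlo : (∫ x, (x : ℝ) ∂μlo) = 0) (hmeanhi : (∫ x, (x : ℝ) ∂μhi) = 0)
    (hvarlo : (∫ x, (x : ℝ) ^ 2 ∂μlo) = σlo ^ 2)
    (hvarhi : (∫ x, (x : ℝ) ^ 2 ∂μhi) = σhi ^ 2)
    (Pstar : Measure (ℕ → ↥Obar)) (hP : IsSwitchMeasure Obar μlo μhi Pstar)
    (N : ℕ) :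
    (Pstar (⋂ n, ⋂ (_ : N ≤ n),
        {ω : ℕ → ↥Obar | ∑ i ∈ Finset.range n, (ω i : ℝ) ≤ 0})
      ≤ ENNReal.ofReal (σhi / (σhi + σlo)) ∧
     Pstar (⋂ n, ⋂ (_ : N ≤ n),
        {ω : ℕ → ↥Obar | 0 < ∑ i ∈ Finset.range n, (ω i : ℝ)})
      ≤ ENNReal.ofReal (σhi / (σhi + σlo))) ∧
    σhi / (σhi + σlo) < 1 := by
  have := hP.1
  have hdiv := ae_not_tendsto_runningSum hP (measure_coe_eq_zero_lt_one hσlo.ne' hvarlo)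
    (measure_coe_eq_zero_lt_one (hσlo.trans hσ).ne' hvarhi)
  have hmart := martingale_runningSum hP hmeanlo hmeanhi
  have hnonpos : Pstar {ω | ∀ᶠ n in atTop, runningSum n ω ≤ 0} = 0 :=
    hmart.submartingale.measure_eventually_nonpos_eq_zero
      (ae_of_all _ fun ω i => abs_runningSum_succ_sub_le i ω) hdiv
  have hnonneg : Pstar {ω | ∀ᶠ n in atTop, 0 ≤ runningSum n ω} = 0 := by
    simpa using hmart.neg.submartingale.measure_eventually_nonpos_eq_zero
      (ae_of_all _ fun ω i => by
        simpa [abs_sub_comm, neg_add_eq_sub] using abs_runningSum_succ_sub_le i ω)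
      (hdiv.mono fun ω h c hc => h (-c) (by simpa using hc.neg))
  refine ⟨⟨?_, ?_⟩, (div_lt_one (by linarith)).2 (by linarith)⟩
  · refine (measure_mono_null (fun ω hω => ?_) hnonpos).trans_le bot_le
    exact eventually_atTop.2 ⟨N, fun n hn => mem_iInter₂.1 hω n hn⟩
  · refine (measure_mono_null (fun ω hω => ?_) hnonneg).trans_le bot_le
    exact eventually_atTop.2 ⟨N, fun n hn => (mem_iInter₂.1 hω n hn).le⟩

/-- **Theorem (indefinite switching).** Under the no-learning switching measure
`P*`, for every `N ≥ 1` the probability that the running sum stays forever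
`≤ 0` (respectively `> 0`) from time `N` on is at most `σ̄/(σ̄+σ̲) < 1`. -/
theorem switching_indefinitely (Obar : Finset ℝ) (μlo μhi : Measure ↥Obar)
    (σlo σhi : ℝ) (hσlo : 0 < σlo) (hσ : σlo < σhi)
    (hplo : IsProbabilityMeasure μlo) (hphi : IsProbabilityMeasure μhi)
    (hsupplo : ∀ x : ↥Obar, μlo {x} ≠ 0) (hsupphi : ∀ x : ↥Obar, μhi {x} ≠ 0)
    (hmeanlo : (∫ x, (x : ℝ) ∂μlo) = 0) (hmeanhi : (∫ x, (x : ℝ) ∂μhi) = 0)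
    (hvarlo : (∫ x, (x : ℝ) ^ 2 ∂μlo) = σlo ^ 2)
    (hvarhi : (∫ x, (x : ℝ) ^ 2 ∂μhi) = σhi ^ 2)
    (Pstar : Measure (ℕ → ↥Obar)) (hP : IsSwitchMeasure Obar μlo μhi Pstar)
    (N : ℕ) (hN : 1 ≤ N) :
    (Pstar (⋂ n, ⋂ (_ : N ≤ n),
        {ω : ℕ → ↥Obar | ∑ i ∈ Finset.range n, (ω i : ℝ) ≤ 0})
      ≤ ENNReal.ofReal (σhi / (σhi + σlo)) ∧
     Pstar (⋂ n, ⋂ (_ : N ≤ n),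
        {ω : ℕ → ↥Obar | 0 < ∑ i ∈ Finset.range n, (ω i : ℝ)})
      ≤ ENNReal.ofReal (σhi / (σhi + σlo))) ∧
    σhi / (σhi + σlo) < 1 :=
  switching_indefinitely_general Obar μlo μhi σlo σhi hσlo hσ hplo hphi hmeanlo hmeanhi hvarlo
    hvarhi Pstar hP N

end LAB
end
end
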